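/- Define ũ₄ : ℝ² → ℝ by ũ₄(x₁,x₂) = 0 if x₂ ≤ 0; ũ₄(x₁,x₂) = x₂/√|x₁| if x₂ ≥ 0, x₁ ≠ 0 and |x₁|/2 ≥ x₂; and ũ₄(x₁,x₂) = √|x₁|(x₂+1)/(|x₁|+2) otherwise. Then ũ₄ is continuous at the origin but not point-Lipschitz at the origin: for every neighborhood U of (0,0) and every L ≥ 0 there exists x ∈ U with |ũ₄(x) − ũ₄(0,0)| > L‖x‖. In particular, for p_{x₁} = (x₁, x₁/2) with x₁ > 0, one has |ũ₄(p_{x₁}) − ũ₄(0,0)| / ‖p_{x₁}‖ = 1/√(5 x₁). -/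

import Mathlib

open Set Filter

/-- The fourth component of the parametric optimizer of the variant of Robinson's
counterexample in which the entry `x₁` of the constraint matrix is replaced by `√|x₁|`.
Here the plane carries the Euclidean norm. -/
noncomputable def ut4 (x : EuclideanSpace ℝ (Fin 2)) : ℝ :=
  if x 1 ≤ 0 then 0
  else if 0 ≤ x 1 ∧ x 0 ≠ 0 ∧ x 1 ≤ |x 0| / 2 then x 1 / Real.sqrt |x 0|
  else Real.sqrt |x 0| * (x 1 + 1) / (|x 0| + 2)

/-- The point `p_{x₁} = (x₁, x₁/2)` as an element of the Euclidean plane. -/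
noncomputable def pPt (a : ℝ) : EuclideanSpace ℝ (Fin 2) :=
  (WithLp.equiv 2 (Fin 2 → ℝ)).symm ![a, a / 2]

/-!
Near the origin `ũ₄` is bounded by `√|x₁|`: on the middle branch `x₂/√|x₁| ≤ √|x₁|/2`, and on the
last one the factor `(x₂ + 1)/(|x₁| + 2)` is at most `1` once `x₂ ≤ 1`. This gives continuity.
Along the ray `x₂ = x₁/2` the function equals `√x₁/2` while the norm is `√5 x₁/2`, so the
difference quotient `1/√(5 x₁)` is unbounded as `x₁ → 0⁺`, which rules out a Lipschitz bound.
-/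

open Topology

lemma exists_lt_norm_sub_of_tendsto_atTop {α E F : Type*} [SeminormedAddCommGroup E]
    [SeminormedAddCommGroup F] {l : Filter α} [l.NeBot] {f : E → F} {p : α → E} {x₀ : E}
    (hp : Tendsto p l (𝓝 x₀))
    (hq : Tendsto (fun t ↦ ‖f (p t) - f x₀‖ / ‖p t - x₀‖) l atTop)
    {U : Set E} (hU : U ∈ 𝓝 x₀) (L : ℝ) :
    ∃ x ∈ U, L * ‖x - x₀‖ < ‖f x - f x₀‖ := by
  obtain ⟨t, htU, htL, htpos⟩ :=
    ((hp.eventually_mem hU).and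
      ((hq.eventually_gt_atTop L).and (hq.eventually_gt_atTop 0))).exists
  have hdist : 0 < ‖p t - x₀‖ := by
    by_contra! h
    simp [le_antisymm h (norm_nonneg _)] at htpos
  exact ⟨p t, htU, (lt_div_iff₀ hdist).mp htL⟩

lemma ut4_zero : ut4 0 = 0 := by
  simp [ut4]

lemma abs_ut4_le_sqrt_abs (x : EuclideanSpace ℝ (Fin 2)) (hx : x 1 ≤ 1) :
    |ut4 x| ≤ √|x 0| := by
  unfold ut4
  split_ifs with hneg hsmall
  · simp
  · obtain ⟨hx1, hx0, hle⟩ := hsmall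
    have hpos : 0 < √|x 0| := Real.sqrt_pos.mpr (abs_pos.mpr hx0)
    rw [abs_of_nonneg (by positivity)]
    calc x 1 / √|x 0| ≤ |x 0| / 2 / √|x 0| := by gcongr
      _ = √|x 0| / 2 := by rw [div_right_comm, Real.div_sqrt]
      _ ≤ √|x 0| := by linarith
  · push Not at hneg
    rw [abs_of_nonneg (by positivity), div_le_iff₀ (by positivity)]
    nlinarith [Real.sqrt_nonneg |x 0|, abs_nonneg (x 0)]

lemma continuousAt_ut4_zero : ContinuousAt ut4 0 := by
  rw [ContinuousAt, ut4_zero]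
  have hcoord : Continuous fun x : EuclideanSpace ℝ (Fin 2) ↦ x 1 := by fun_prop
  have hbound : ∀ᶠ x in 𝓝 (0 : EuclideanSpace ℝ (Fin 2)), x 1 ≤ 1 :=
    (hcoord.tendsto 0).eventually (ge_mem_nhds (by simp))
  refine squeeze_zero_norm' (hbound.mono fun x hx ↦ abs_ut4_le_sqrt_abs x hx) ?_
  have : Continuous fun x : EuclideanSpace ℝ (Fin 2) ↦ √|x 0| := by fun_prop
  simpa using this.tendsto 0

lemma pPt_apply_zero (a : ℝ) : pPt a 0 = a := rfl

lemma pPt_apply_one (a : ℝ) : pPt a 1 = a / 2 := rfl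

lemma norm_pPt {a : ℝ} (ha : 0 ≤ a) : ‖pPt a‖ = √5 / 2 * a := by
  rw [EuclideanSpace.norm_eq, Fin.sum_univ_two, pPt_apply_zero, pPt_apply_one,
    Real.norm_eq_abs, Real.norm_eq_abs, sq_abs, sq_abs,
    show a ^ 2 + (a / 2) ^ 2 = 5 / 4 * a ^ 2 by ring, Real.sqrt_mul (by norm_num),
    Real.sqrt_sq ha, Real.sqrt_div' _ (by norm_num : (0:ℝ) ≤ 4),
    show (4 : ℝ) = 2 ^ 2 by norm_num, Real.sqrt_sq (by norm_num)]

lemma ut4_pPt {a : ℝ} (ha : 0 < a) : ut4 (pPt a) = √a / 2 := by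
  rw [ut4, pPt_apply_zero, pPt_apply_one, abs_of_pos ha,
    if_neg (by linarith), if_pos ⟨by linarith, ha.ne', le_rfl⟩, div_right_comm, Real.div_sqrt]

lemma ut4_pPt_diff_quotient {a : ℝ} (ha : 0 < a) :
    |ut4 (pPt a) - ut4 0| / ‖pPt a‖ = 1 / √(5 * a) := by
  have hsa : 0 < √a := Real.sqrt_pos.mpr ha
  have h5 : (0 : ℝ) < √5 := by positivity
  rw [ut4_zero, sub_zero, ut4_pPt ha, norm_pPt ha.le, abs_of_pos (by positivity),
    Real.sqrt_mul (by norm_num)]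
  field_simp
  rw [Real.sq_sqrt ha.le]

lemma tendsto_pPt_zero : Tendsto pPt (𝓝[>] 0) (𝓝 0) := by
  have hcont : Continuous pPt :=
    (PiLp.continuous_toLp 2 _).comp (continuous_pi fun i ↦ by fin_cases i <;> simp <;> fun_prop)
  have hzero : pPt 0 = 0 := by ext i; fin_cases i <;> simp [pPt]
  exact tendsto_nhdsWithin_of_tendsto_nhds (hzero ▸ hcont.tendsto 0)

lemma tendsto_one_div_sqrt_mul_nhdsGT_zero {c : ℝ} (hc : 0 < c) :
    Tendsto (fun a : ℝ ↦ 1 / √(c * a)) (𝓝[>] 0) atTop := by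
  simp only [one_div]
  refine tendsto_inv_nhdsGT_zero.comp (tendsto_nhdsWithin_iff.mpr ⟨?_, ?_⟩)
  · refine tendsto_nhdsWithin_of_tendsto_nhds ?_
    have : Continuous fun a : ℝ ↦ √(c * a) := by fun_prop
    simpa using this.tendsto 0
  · filter_upwards [self_mem_nhdsWithin] with a (ha : 0 < a)
    exact Real.sqrt_pos.mpr (mul_pos hc ha)

/-- `ũ₄` is continuous at the origin but not point-Lipschitz there; in
particular for `p_{x₁} = (x₁, x₁/2)` with `x₁ > 0`, the difference quotient equals
`1/√(5 x₁)`. -/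
theorem stmt_12 :
    ContinuousAt ut4 0 ∧
    (∀ U ∈ nhds (0 : EuclideanSpace ℝ (Fin 2)), ∀ L : ℝ, 0 ≤ L →
      ∃ x ∈ U, L * ‖x‖ < |ut4 x - ut4 0|) ∧
    (∀ a : ℝ, 0 < a →
      |ut4 (pPt a) - ut4 0| / ‖pPt a‖ = 1 / Real.sqrt (5 * a)) := by
  refine ⟨continuousAt_ut4_zero, fun U hU L _ ↦ ?_, fun a ha ↦ ut4_pPt_diff_quotient ha⟩
  have hquot : Tendsto (fun a ↦ ‖ut4 (pPt a) - ut4 0‖ / ‖pPt a - 0‖) (𝓝[>] 0) atTop := by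
    refine (tendsto_one_div_sqrt_mul_nhdsGT_zero (by norm_num : (0 : ℝ) < 5)).congr' ?_
    filter_upwards [self_mem_nhdsWithin] with a (ha : 0 < a)
    rw [sub_zero, Real.norm_eq_abs, ut4_pPt_diff_quotient ha]
  simpa only [sub_zero, Real.norm_eq_abs] using
    exists_lt_norm_sub_of_tendsto_atTop tendsto_pPt_zero hquot hU L
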